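/- arXiv:2212.10643 — 2 statements merged into one kernel-verified Lean document; each statement's English description precedes it below -/
import Mathlib

section
/- Let G be a simple graph with maximum degree at most 4 and let v be a vertex of G with d_G(v) ≤ 2, where S = {v}. If the S-reduced graph G*S admits a 2-PCF 9-coloring, then G admits a 2-PCF 9-coloring. (This is the reduction step showing that a vertex-minimum counterexample has no vertex of degree at most 2.) -/
/-- An `h`-PCF coloring of `G`: a proper coloring `φ` such that for every vertex `v`,
at least `min h (d_G(v))` colors appear on exactly one neighbor of `v`. -/
def SimpleGraph.IsPCFColoring {V α : Type*} (G : SimpleGraph V) (h : ℕ)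
    (φ : V → α) : Prop :=
  (∀ ⦃u w : V⦄, G.Adj u w → φ u ≠ φ w) ∧
  ∀ v : V, min h {u | G.Adj v u}.ncard ≤
    {c : α | {u | G.Adj v u ∧ φ u = c}.ncard = 1}.ncard

/-- `G` admits an `h`-PCF `k`-coloring. -/
def SimpleGraph.HasPCFColoring {V : Type*} (G : SimpleGraph V) (h k : ℕ) : Prop :=
  ∃ φ : V → Fin k, G.IsPCFColoring h φ

/-- The `S`-reduced graph `G*S`: delete `S`, and join two distinct nonadjacent
vertices outside `S` that have a common neighbor in `S` (vertices of `S`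
remain as isolated vertices). -/
def SimpleGraph.reduce {V : Type*} (G : SimpleGraph V) (S : Set V) :
    SimpleGraph V where
  Adj u w := u ∉ S ∧ w ∉ S ∧ u ≠ w ∧
    (G.Adj u w ∨ ∃ s ∈ S, G.Adj u s ∧ G.Adj s w)
  symm := by
    constructor
    rintro u w ⟨hu, hw, hne, h | ⟨s, hs, h1, h2⟩⟩
    · exact ⟨hw, hu, hne.symm, Or.inl h.symm⟩
    · exact ⟨hw, hu, hne.symm, Or.inr ⟨s, hs, h2.symm, h1.symm⟩⟩
  loopless := ⟨fun u h => h.2.2.1 rfl⟩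


/-
Extend a PCF coloring of `G*{v}` by giving `v` a color that is not used on the at most
`2 + 2 * 3 = 8` vertices at distance one or two from `v`. The neighbors of `v` are pairwise
adjacent in `G*{v}`, so their colors are distinct and all unique at `v`. A neighbor `u` of `v`
gains `v`, whose color is unique at `u`, and loses at most the other neighbor of `v`, which costs
at most one unique color; the neighborhoods of all other vertices are unchanged.
-/

theorem Function.eqOn_update_of_notMem {V α : Type*} [DecidableEq V] {φ : V → α} {v : V}
    {c : α} {M : Set V} (hv : v ∉ M) : Set.EqOn φ (Function.update φ v c) M :=
  fun _ hw => (Function.update_of_ne (ne_of_mem_of_not_mem hw hv) _ _).symm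

namespace SimpleGraph

variable {V α : Type*}

def uniqueColors (φ : V → α) (M : Set V) : Set α :=
  {c | {w | w ∈ M ∧ φ w = c}.ncard = 1}

def HasUniqueColors (h : ℕ) (φ : V → α) (M : Set V) : Prop :=
  min h M.ncard ≤ (uniqueColors φ M).ncard

theorem isPCFColoring_iff {G : SimpleGraph V} {h : ℕ} {φ : V → α} :
    G.IsPCFColoring h φ ↔ (∀ ⦃u w : V⦄, G.Adj u w → φ u ≠ φ w) ∧
      ∀ u, HasUniqueColors h φ (G.neighborSet u) :=
  Iff.rfl

section UniqueColors

variable {φ ψ : V → α} {M B : Set V} {h : ℕ}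

theorem uniqueColors_subset_image : uniqueColors φ M ⊆ φ '' M := by
  intro c hc
  obtain ⟨w, hw⟩ := Set.ncard_eq_one.mp hc
  have hw' : w ∈ {w | w ∈ M ∧ φ w = c} := hw ▸ rfl
  exact ⟨w, hw'.1, hw'.2⟩

theorem uniqueColors_congr (hφψ : Set.EqOn φ ψ M) : uniqueColors φ M = uniqueColors ψ M := by
  have hclass : ∀ c, {w | w ∈ M ∧ φ w = c} = {w | w ∈ M ∧ ψ w = c} := fun c =>
    Set.ext fun w => and_congr_right fun hw => by rw [hφψ hw]
  simp only [uniqueColors, hclass]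

theorem HasUniqueColors.congr (hφ : HasUniqueColors h φ M) (hφψ : Set.EqOn φ ψ M) :
    HasUniqueColors h ψ M := by
  rwa [HasUniqueColors, ← uniqueColors_congr hφψ]

theorem uniqueColors_eq_image_of_injOn (hφ : Set.InjOn φ M) : uniqueColors φ M = φ '' M := by
  refine uniqueColors_subset_image.antisymm ?_
  rintro _ ⟨a, ha, rfl⟩
  have hclass : {w | w ∈ M ∧ φ w = φ a} = {a} :=
    Set.ext fun w => ⟨fun hw => hφ hw.1 ha hw.2, by rintro rfl; exact ⟨ha, rfl⟩⟩
  show _ = 1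
  rw [hclass, Set.ncard_singleton]

theorem hasUniqueColors_of_injOn (hφ : Set.InjOn φ M) : HasUniqueColors h φ M := by
  rw [HasUniqueColors, uniqueColors_eq_image_of_injOn hφ, hφ.ncard_image]
  exact min_le_right _ _

theorem uniqueColors_insert {a : V} (ha : φ a ∉ φ '' M) :
    uniqueColors φ (insert a M) = insert (φ a) (uniqueColors φ M) := by
  ext c
  by_cases hc : c = φ a
  · subst hc
    have hclass : {w | w ∈ insert a M ∧ φ w = φ a} = {a} := by
      ext w
      refine ⟨fun ⟨hw, hwa⟩ => ?_, fun hw => hw ▸ ⟨Set.mem_insert _ _, rfl⟩⟩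
      exact hw.resolve_right fun hwM => ha ⟨w, hwM, hwa⟩
    simp only [Set.mem_insert_iff, true_or, iff_true]
    show _ = 1
    rw [hclass, Set.ncard_singleton]
  · have hclass : {w | w ∈ insert a M ∧ φ w = c} = {w | w ∈ M ∧ φ w = c} := by
      ext w
      refine and_congr_left fun hwc => ⟨fun hw => hw.resolve_left ?_, Or.inr⟩
      rintro rfl
      exact hc hwc.symm
    rw [Set.mem_insert_iff, or_iff_right hc]
    show _ = 1 ↔ _ = 1
    rw [hclass]

theorem ncard_uniqueColors_insert (hM : M.Finite) {a : V} (ha : φ a ∉ φ '' M) :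
    (uniqueColors φ (insert a M)).ncard = (uniqueColors φ M).ncard + 1 := by
  rw [uniqueColors_insert ha, Set.ncard_insert_of_notMem
    (fun hc => ha (uniqueColors_subset_image hc)) ((hM.image φ).subset uniqueColors_subset_image)]

theorem ncard_uniqueColors_le_sdiff_add (hM : M.Finite) (hB : B.Finite) :
    (uniqueColors φ M).ncard ≤ (uniqueColors φ (M \ B)).ncard + B.ncard := by
  have hsub : uniqueColors φ M ⊆ uniqueColors φ (M \ B) ∪ φ '' B := by
    intro c hc
    by_cases hcB : c ∈ φ '' B
    · exact Or.inr hcB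
    · have hclass : {w | w ∈ M \ B ∧ φ w = c} = {w | w ∈ M ∧ φ w = c} :=
        Set.ext fun w => ⟨fun hw => ⟨hw.1.1, hw.2⟩,
          fun hw => ⟨⟨hw.1, fun hwB => hcB ⟨w, hwB, hw.2⟩⟩, hw.2⟩⟩
      exact Or.inl (show _ = 1 by rw [hclass]; exact hc)
  have hfin : (uniqueColors φ (M \ B) ∪ φ '' B).Finite :=
    (hM.sdiff.image φ |>.subset uniqueColors_subset_image).union (hB.image φ)
  calc (uniqueColors φ M).ncard ≤ (uniqueColors φ (M \ B) ∪ φ '' B).ncard :=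
        Set.ncard_le_ncard hsub hfin
    _ ≤ (uniqueColors φ (M \ B)).ncard + (φ '' B).ncard := Set.ncard_union_le _ _
    _ ≤ _ := Nat.add_le_add_left (Set.ncard_image_le hB) _

theorem HasUniqueColors.insert_sdiff (hφ : HasUniqueColors h φ M) (hM : M.Finite) (hBM : B ⊆ M)
    (hB : B.ncard ≤ 1) {a : V} (ha : φ a ∉ φ '' (M \ B)) :
    HasUniqueColors h φ (insert a (M \ B)) := by
  have hdel := ncard_uniqueColors_le_sdiff_add (φ := φ) hM (hM.subset hBM)
  have hins := ncard_uniqueColors_insert hM.sdiff ha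
  have hM_card := Set.ncard_sdiff_add_ncard_of_subset hBM hM
  have hins_card := Set.ncard_insert_of_notMem (fun haM => ha ⟨a, haM, rfl⟩) hM.sdiff
  unfold HasUniqueColors at *
  omega

end UniqueColors

section Reduce

variable {G : SimpleGraph V} {v u w : V}

theorem reduce_singleton_adj :
    (G.reduce {v}).Adj u w ↔
      u ≠ v ∧ w ≠ v ∧ u ≠ w ∧ (G.Adj u w ∨ G.Adj u v ∧ G.Adj v w) := by
  simp [reduce]

theorem reduce_singleton_adj_of_adj (hu : u ≠ v) (hw : w ≠ v) (huw : G.Adj u w) :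
    (G.reduce {v}).Adj u w :=
  reduce_singleton_adj.mpr ⟨hu, hw, huw.ne, Or.inl huw⟩

theorem reduce_singleton_adj_of_adj_of_adj (hu : G.Adj v u) (hw : G.Adj v w) (huw : u ≠ w) :
    (G.reduce {v}).Adj u w :=
  reduce_singleton_adj.mpr ⟨hu.ne', hw.ne', huw, Or.inr ⟨hu.symm, hw⟩⟩

theorem neighborSet_reduce_singleton_of_not_adj (hu : u ≠ v) (huv : ¬G.Adj v u) :
    (G.reduce {v}).neighborSet u = G.neighborSet u := by
  ext w
  simp only [mem_neighborSet, reduce_singleton_adj]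
  constructor
  · rintro ⟨-, -, -, huw | ⟨hvu, -⟩⟩
    · exact huw
    · exact absurd hvu.symm huv
  · intro huw
    exact ⟨hu, fun hwv => huv (hwv ▸ huw.symm), huw.ne, Or.inl huw⟩

theorem neighborSet_reduce_singleton_sdiff_subset :
    (G.reduce {v}).neighborSet u \ G.neighborSet u ⊆ G.neighborSet v \ {u} := by
  rintro w ⟨huw', huw⟩
  obtain ⟨-, -, hne, huw'' | ⟨-, hvw⟩⟩ := reduce_singleton_adj.mp huw'
  · exact absurd huw'' huw
  · exact ⟨hvw, hne.symm⟩

theorem neighborSet_reduce_singleton_inter (hu : u ≠ v) :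
    (G.reduce {v}).neighborSet u ∩ G.neighborSet u = G.neighborSet u \ {v} := by
  ext w
  simp only [Set.mem_inter_iff, Set.mem_sdiff, mem_neighborSet, Set.mem_singleton_iff]
  exact ⟨fun ⟨huw', huw⟩ => ⟨huw, (reduce_singleton_adj.mp huw').2.1⟩,
    fun ⟨huw, hwv⟩ => ⟨reduce_singleton_adj_of_adj hu hwv huw, huw⟩⟩

end Reduce

section Extension

variable {G : SimpleGraph V} {v u : V}

def secondNeighborhood (G : SimpleGraph V) (v : V) : Set V :=
  ⋃ a ∈ G.neighborSet v, insert a (G.neighborSet a \ {v})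

theorem neighborSet_subset_secondNeighborhood : G.neighborSet v ⊆ G.secondNeighborhood v :=
  fun a ha => Set.mem_biUnion ha (Set.mem_insert a _)

theorem neighborSet_sdiff_subset_secondNeighborhood (hvu : G.Adj v u) :
    G.neighborSet u \ {v} ⊆ G.secondNeighborhood v :=
  fun _ hw => Set.mem_biUnion hvu (Set.mem_insert_of_mem u hw)

theorem ncard_secondNeighborhood_le [Finite V] {D : ℕ}
    (hD : ∀ a, (G.neighborSet a).ncard ≤ D) :
    (G.secondNeighborhood v).ncard ≤ (G.neighborSet v).ncard * D := by
  have hN := Set.toFinite (G.neighborSet v)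
  rw [secondNeighborhood, ← hN.coe_toFinset, Set.ncard_coe_finset, ← smul_eq_mul]
  refine (Finset.set_ncard_biUnion_le _ _).trans (Finset.sum_le_card_nsmul _ _ D fun a ha => ?_)
  have hva : v ∈ G.neighborSet a := (hN.mem_toFinset.mp ha).symm
  calc (insert a (G.neighborSet a \ {v})).ncard ≤ (G.neighborSet a \ {v}).ncard + 1 :=
        Set.ncard_insert_le _ _
    _ = (G.neighborSet a).ncard := Set.ncard_sdiff_singleton_add_one hva
    _ ≤ D := hD a

open Function

variable [DecidableEq V] {φ : V → α} {c : α} {h : ℕ}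

theorem update_ne_update_of_adj (hφ : ∀ ⦃u w⦄, (G.reduce {v}).Adj u w → φ u ≠ φ w)
    (hc : c ∉ φ '' G.neighborSet v) {u w : V} (huw : G.Adj u w) :
    update φ v c u ≠ update φ v c w := by
  rcases eq_or_ne u v with rfl | hu
  · rw [update_self, update_of_ne huw.ne']
    exact fun hcw => hc ⟨w, huw, hcw.symm⟩
  rcases eq_or_ne w v with rfl | hw
  · rw [update_self, update_of_ne hu]
    exact fun hcu => hc ⟨u, huw.symm, hcu⟩
  rw [update_of_ne hu, update_of_ne hw]
  exact hφ (reduce_singleton_adj_of_adj hu hw huw)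

variable (hφ : (G.reduce {v}).IsPCFColoring h φ)
include hφ

theorem hasUniqueColors_update_self :
    HasUniqueColors h (update φ v c) (G.neighborSet v) := by
  have hinj : Set.InjOn φ (G.neighborSet v) := fun a ha b hb hab =>
    by_contra fun hab' => hφ.1 (reduce_singleton_adj_of_adj_of_adj ha hb hab') hab
  exact (hasUniqueColors_of_injOn hinj).congr (eqOn_update_of_notMem G.notMem_neighborSet_self)

theorem hasUniqueColors_update_of_adj [Finite V] (hv : (G.neighborSet v).ncard ≤ 2)
    (hc : c ∉ φ '' G.secondNeighborhood v) (hvu : G.Adj v u) :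
    HasUniqueColors h (update φ v c) (G.neighborSet u) := by
  set M' := (G.reduce {v}).neighborSet u
  have hvM' : v ∉ M' := fun hv' => (reduce_singleton_adj.mp hv').2.1 rfl
  have hM' : M' \ (M' \ G.neighborSet u) = G.neighborSet u \ {v} := by
    rw [Set.sdiff_sdiff_right_self, neighborSet_reduce_singleton_inter hvu.ne']
  have hB : (M' \ G.neighborSet u).ncard ≤ 1 := by
    refine (Set.ncard_le_ncard neighborSet_reduce_singleton_sdiff_subset).trans ?_
    rw [Set.ncard_sdiff_singleton_of_mem ((G.mem_neighborSet v u).mpr hvu)]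
    omega
  have hcu : update φ v c v ∉ update φ v c '' (M' \ (M' \ G.neighborSet u)) := by
    rw [hM', ← (eqOn_update_of_notMem fun hv' => hv'.2 rfl).image_eq, update_self]
    exact fun hcu => hc (Set.image_mono (neighborSet_sdiff_subset_secondNeighborhood hvu) hcu)
  have key := (((isPCFColoring_iff.mp hφ).2 u).congr (eqOn_update_of_notMem hvM')).insert_sdiff
    (Set.toFinite _) Set.sdiff_subset hB hcu
  rwa [hM', Set.insert_sdiff_singleton,
    Set.insert_eq_of_mem ((G.mem_neighborSet u v).mpr hvu.symm)] at key

theorem hasUniqueColors_update_of_not_adj (hu : u ≠ v) (hvu : ¬G.Adj v u) :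
    HasUniqueColors h (update φ v c) (G.neighborSet u) := by
  rw [← neighborSet_reduce_singleton_of_not_adj hu hvu]
  exact ((isPCFColoring_iff.mp hφ).2 u).congr
    (eqOn_update_of_notMem fun hv' => (reduce_singleton_adj.mp hv').2.1 rfl)

theorem isPCFColoring_update_of_reduce_singleton [Finite V] (hv : (G.neighborSet v).ncard ≤ 2)
    (hc : c ∉ φ '' G.secondNeighborhood v) : G.IsPCFColoring h (update φ v c) := by
  refine isPCFColoring_iff.mpr ⟨fun u w huw => update_ne_update_of_adj hφ.1
    (fun hcv => hc (Set.image_mono neighborSet_subset_secondNeighborhood hcv)) huw, fun u => ?_⟩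
  rcases eq_or_ne u v with rfl | hu
  · exact hasUniqueColors_update_self hφ
  by_cases hvu : G.Adj v u
  · exact hasUniqueColors_update_of_adj hφ hv hc hvu
  · exact hasUniqueColors_update_of_not_adj hφ hu hvu

end Extension

end SimpleGraph

open SimpleGraph in
theorem reduce_deg_le_two_vertex {V : Type*} [Fintype V]
    (G : SimpleGraph V)
    (hΔ : ∀ u : V, {w | G.Adj u w}.ncard ≤ 4)
    (v : V) (hv : {u | G.Adj v u}.ncard ≤ 2)
    (h : (G.reduce {v}).HasPCFColoring 2 9) :
    G.HasPCFColoring 2 9 := by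
  classical
  obtain ⟨φ, hφ⟩ := h
  have hsmall : (φ '' G.secondNeighborhood v).ncard < Nat.card (Fin 9) :=
    calc (φ '' G.secondNeighborhood v).ncard ≤ (G.secondNeighborhood v).ncard :=
          Set.ncard_image_le (Set.toFinite _)
      _ ≤ (G.neighborSet v).ncard * 4 := ncard_secondNeighborhood_le hΔ
      _ ≤ 2 * 4 := Nat.mul_le_mul_right 4 hv
      _ < Nat.card (Fin 9) := by simp
  obtain ⟨c, hc⟩ : ∃ c, c ∉ φ '' G.secondNeighborhood v := by
    by_contra! hall
    exact hsmall.ne (by rw [Set.eq_univ_of_forall hall, Set.ncard_univ])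
  exact ⟨_, isPCFColoring_update_of_reduce_singleton hφ hv hc⟩
end

section
/- Let G be a simple graph with maximum degree at most 4 containing pairwise adjacent vertices x, y, z, where x has degree exactly 3 with third neighbor x₁ ∉ {y, z}, and x₁ has degree exactly 4. Set S = {x, y, z}. If the S-reduced graph G*S admits a 2-PCF 9-coloring, then G admits a 2-PCF 9-coloring. (Together with the previous case this shows a vertex-minimum counterexample has no 3-cycle containing a 3-vertex.) -/
/-!
Keep the coloring `φ` of `G*S`, `S = {x, y, z}`, outside `S` and recolor `y`, `z`, `x` greedily
with `b`, `c`, `a`. The at most two neighbors outside `S` of a vertex of `S` form a clique in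
`G*S`, so `φ` is injective on them. A vertex `v ∉ S` with a single neighbor `s ∈ S` gains at
most one neighbor in `G*S`, so it keeps a unique color among its outer neighbors, and at most two
colors of `s` would cost `v` its unique colors in `G`; a vertex `v ∉ S` with several neighbors in
`S` has at most two outer neighbors, whose colors those neighbors avoid. With `y` having at least
as many outer neighbors as `z`, this leaves at most eight forbidden colors for `b` and then for
`c`. For `a`: if `x` is the only neighbor of `x₁` in `S`, the three outer neighbors of `x₁` are
all its neighbors in `G*S`, so they carry distinct colors and nothing is forbidden at `x₁`;
otherwise `φ x₁` is already among the colors `a` avoids at `y` or `z`.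
-/

namespace Multiset

variable {α : Type*} [DecidableEq α] {m m' : Multiset α} {a b : α}

def singles (m : Multiset α) : Finset α := m.toFinset.filter (m.count · = 1)

@[simp]
lemma mem_singles : a ∈ m.singles ↔ m.count a = 1 := by
  simp only [singles, Finset.mem_filter, mem_toFinset, and_iff_right_iff_imp]
  intro h
  exact count_pos.1 (by omega)

lemma erase_singles_cons : (a ::ₘ m).singles.erase a = m.singles.erase a := by
  ext c
  by_cases hc : c = a
  · simp [hc]
  · simp [hc, count_cons_of_ne hc]

lemma card_singles_cons_le : (a ::ₘ m).singles.card ≤ m.singles.card + 1 :=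
  calc (a ::ₘ m).singles.card ≤ ((a ::ₘ m).singles.erase a).card + 1 := by
        have := Finset.pred_card_le_card_erase (s := (a ::ₘ m).singles) (a := a); omega
    _ = (m.singles.erase a).card + 1 := by rw [erase_singles_cons]
    _ ≤ m.singles.card + 1 := by grw [Finset.card_erase_le]

lemma card_singles_le_cons : m.singles.card ≤ (a ::ₘ m).singles.card + 1 :=
  calc m.singles.card ≤ (m.singles.erase a).card + 1 := by
        have := Finset.pred_card_le_card_erase (s := m.singles) (a := a); omega
    _ = ((a ::ₘ m).singles.erase a).card + 1 := by rw [erase_singles_cons]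
    _ ≤ (a ::ₘ m).singles.card + 1 := by grw [Finset.card_erase_le]

lemma card_singles_cons_of_notMem (ha : a ∉ m) :
    (a ::ₘ m).singles.card = m.singles.card + 1 := by
  have hsingles : (a ::ₘ m).singles = insert a m.singles := by
    ext c
    by_cases hc : c = a
    · simp [hc, count_eq_zero_of_notMem ha]
    · simp [hc, count_cons_of_ne hc]
  rw [hsingles, Finset.card_insert_of_notMem (by simp [count_eq_zero_of_notMem ha])]

lemma card_singles_of_nodup (hm : m.Nodup) : m.singles.card = card m := by
  rw [← toFinset_card_of_nodup hm]
  congr 1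
  ext c
  simp only [mem_singles, mem_toFinset]
  exact ⟨fun h => count_pos.1 (by omega), fun h => count_eq_one_of_mem hm h⟩

lemma card_singles_add_two_le (ha : 2 ≤ m.count a) : m.singles.card + 2 ≤ card m := by
  have hle : m.singles.val ≤ m := le_iff_count.2 fun c => by
    by_cases hc : c ∈ m.singles
    · rw [count_eq_one_of_mem m.singles.nodup hc, ← mem_singles.1 hc]
    · rw [count_eq_zero_of_notMem hc]; exact Nat.zero_le _
  have haS : a ∉ m.singles := by simp; omega
  have hrest : 2 ≤ card (m - m.singles.val) := by
    grw [← count_le_card a]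
    rwa [count_sub, count_eq_zero_of_notMem haS]
  have := card_sub hle
  have := card_le_card hle
  simp only [Finset.card_val] at *
  omega

lemma nodup_of_two_le_card_singles (h3 : card m ≤ 3) (h2 : 2 ≤ m.singles.card) : m.Nodup :=
  nodup_iff_count_le_one.2 fun c => by
    by_contra! hc
    have := card_singles_add_two_le hc
    omega

lemma two_le_card_singles (hab : a ≠ b) (ha : m.count a = 1) (hb : m.count b = 1) :
    2 ≤ m.singles.card := by
  calc 2 = ({a, b} : Finset α).card := (Finset.card_pair hab).symm
    _ ≤ m.singles.card := Finset.card_le_card (by simp [Finset.insert_subset_iff, ha, hb])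

lemma two_le_card_singles_cons_cons (hm : m.Nodup) (hab : a ≠ b) (ha : a ∉ m)
    (hb : b ∉ m ∨ 2 ≤ card m) : 2 ≤ (a ::ₘ b ::ₘ m).singles.card := by
  have hca : (a ::ₘ b ::ₘ m).count a = 1 := by
    simp [count_cons_of_ne hab, count_eq_zero_of_notMem ha]
  by_cases hbm : b ∈ m
  · obtain ⟨c, hcm, hcb⟩ : ∃ c ∈ m, c ≠ b := by
      have : 1 < m.toFinset.card := by
        rw [toFinset_card_of_nodup hm]
        exact hb.resolve_left (not_not.2 hbm)
      simpa using Finset.exists_mem_ne this b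
    have hac : a ≠ c := fun h => ha (h ▸ hcm)
    refine two_le_card_singles hac hca ?_
    rw [count_cons_of_ne hac.symm, count_cons_of_ne hcb, count_eq_one_of_mem hm hcm]
  · exact two_le_card_singles hab hca (by simp [count_cons_of_ne hab.symm,
      count_eq_zero_of_notMem hbm])

lemma card_le_card_singles_add (hm : m.Nodup) (hd : Disjoint m m') :
    card m ≤ (m + m').singles.card := by
  rw [← toFinset_card_of_nodup hm]
  refine Finset.card_le_card fun c hc => ?_
  rw [mem_toFinset] at hc
  rw [mem_singles, count_add, count_eq_one_of_mem hm hc,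
    count_eq_zero_of_notMem (disjoint_left.1 hd hc)]

lemma one_le_card_singles_of_le (hle : m ≤ m') (hcard : card m' ≤ card m + 1)
    (h : min 2 (card m') ≤ m'.singles.card) (hm : m ≠ 0) : 1 ≤ m.singles.card := by
  obtain ⟨k, rfl⟩ := le_iff_exists_add.1 hle
  have hm1 : 1 ≤ card m := card_pos.2 hm
  rw [card_add] at hcard h
  rcases (show card k = 0 ∨ card k = 1 by omega) with hk | hk
  · rw [card_eq_zero.1 hk, add_zero] at h
    omega
  · obtain ⟨t, rfl⟩ := card_eq_one.1 hk
    rw [show m + {t} = t ::ₘ m by rw [add_comm, singleton_add], card_singleton] at h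
    have := card_singles_cons_le (a := t) (m := m)
    omega

section Forbidden

variable [Fintype α]

def forbiddenCons (m : Multiset α) : Finset α :=
  Finset.univ.filter fun a => (a ::ₘ m).singles.card < min 2 (card m + 1)

lemma notMem_forbiddenCons :
    a ∉ m.forbiddenCons ↔ min 2 (card m + 1) ≤ (a ::ₘ m).singles.card := by
  simp only [forbiddenCons, Finset.mem_filter, Finset.mem_univ, true_and, not_lt]

lemma forbiddenCons_subset_toFinset (h : m = 0 ∨ 1 ≤ m.singles.card) :
    m.forbiddenCons ⊆ m.toFinset := by
  intro a ha
  by_contra hma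
  rw [mem_toFinset] at hma
  refine notMem_forbiddenCons.2 ?_ ha
  rw [card_singles_cons_of_notMem hma]
  rcases h with rfl | h
  · simp
  · omega

lemma forbiddenCons_eq_empty (hm : m.Nodup) (h3 : 3 ≤ card m) : m.forbiddenCons = ∅ := by
  refine Finset.eq_empty_of_forall_notMem fun a => notMem_forbiddenCons.2 ?_
  have := card_singles_le_cons (a := a) (m := m)
  rw [card_singles_of_nodup hm] at this
  omega

lemma card_forbiddenCons_le_two (h3 : card m ≤ 3) (h : m = 0 ∨ 1 ≤ m.singles.card) :
    m.forbiddenCons.card ≤ 2 := by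
  by_cases hm : m.toFinset.card ≤ 2
  · exact (Finset.card_le_card (forbiddenCons_subset_toFinset h)).trans hm
  · have hnodup : m.Nodup := by
      rw [← toFinset_card_eq_card_iff_nodup]
      have := toFinset_card_le m
      omega
    rw [forbiddenCons_eq_empty hnodup (by have := toFinset_card_le m; omega)]
    simp

end Forbidden

end Multiset

lemma exists_triangle_colors {α : Type*} [Fintype α] [DecidableEq α]
    (hα : 9 ≤ Fintype.card α) (d : α) {Ay Az By Bz Bx : Finset α}
    (hAy : Ay.card ≤ 2) (hAz : Az.card ≤ 2) (hBy : By.card ≤ 2 * Ay.card)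
    (hBz : Bz.card ≤ 2 * Az.card) (hBx : Bx.card ≤ 2) (hBxd : Bx = ∅ ∨ d ∈ Ay ∪ Az) :
    ∃ a b c, a ≠ b ∧ a ≠ c ∧ b ≠ c ∧ a ∉ insert d (Ay ∪ Az ∪ Bx) ∧
      b ∉ insert d (Ay ∪ By) ∧ c ∉ insert d (Az ∪ Bz) ∧
      (b ∉ Az ∨ 2 ≤ Az.card) ∧ (c ∉ Ay ∨ 2 ≤ Ay.card) := by
  wlog hzy : Az.card ≤ Ay.card generalizing Ay Az By Bz
  · obtain ⟨a, c, b, hac, hab, hcb, ha, hc, hb, hcy, hbz⟩ :=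
      this hAz hAy hBz hBy (by rwa [Finset.union_comm]) (by omega)
    exact ⟨a, b, c, hab, hac, hcb.symm, by rwa [Finset.union_comm Ay], hb, hc, hbz, hcy⟩
  have hpick : ∀ F : Finset α, F.card ≤ 8 → ∃ e, e ∉ F := fun F hF => by
    obtain ⟨e, -, he⟩ := Finset.exists_mem_notMem_of_card_lt_card
      (s := F) (t := Finset.univ) (by rw [Finset.card_univ]; omega)
    exact ⟨e, he⟩
  have hunion {s t : Finset α} := Finset.card_union_le s t
  have hinsert {e : α} {s : Finset α} := Finset.card_insert_le e s
  have hsmall {A : Finset α} : (if A.card ≤ 1 then A else ∅).card ≤ 1 := by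
    split_ifs with h <;> simp [h]
  obtain ⟨b, hb⟩ := hpick (insert d (Ay ∪ By ∪ if Az.card ≤ 1 then Az else ∅)) <| by
    grw [hinsert, hunion, hunion, hsmall, hBy]; omega
  obtain ⟨c, hc⟩ := hpick
      (insert b (insert d (Az ∪ Bz ∪ if Ay.card ≤ 1 then Ay else ∅))) <| by
    grw [hinsert, hinsert, hunion, hunion, hBz]
    split_ifs with hy
    · grw [hy]; omega
    · simp only [Finset.card_empty]; omega
  obtain ⟨a, ha⟩ := hpick (insert b (insert c (insert d (Ay ∪ Az ∪ Bx)))) <| by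
    grw [hinsert, hinsert]
    rcases hBxd with rfl | hd
    · grw [hinsert, hunion, hunion]; simp only [Finset.card_empty]; omega
    · rw [Finset.insert_eq_of_mem (Finset.mem_union_left _ hd)]
      grw [hunion, hunion]; omega
  simp only [Finset.mem_insert, Finset.mem_union, not_or] at ha hb hc
  refine ⟨a, b, c, ha.1, ha.2.1, Ne.symm hc.1, by simp [ha.2.2],
    by simp [hb.1, hb.2.1.1, hb.2.1.2], by simp [hc.2.1, hc.2.2.1.1, hc.2.2.1.2], ?_, ?_⟩
  · by_cases hz : Az.card ≤ 1
    · exact Or.inl (by simpa [hz] using hb.2.2)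
    · exact Or.inr (by omega)
  · by_cases hy : Ay.card ≤ 1
    · exact Or.inl (by simpa [hy] using hc.2.2.2)
    · exact Or.inr (by omega)

namespace SimpleGraph

variable {V α : Type*}

lemma reduce_adj_of_adj {G : SimpleGraph V} {S : Set V} {u w : V} (hu : u ∉ S) (hw : w ∉ S)
    (h : G.Adj u w) : (G.reduce S).Adj u w :=
  ⟨hu, hw, G.ne_of_adj h, Or.inl h⟩

variable [Fintype V]

section Colors

variable (G : SimpleGraph V) [DecidableRel G.Adj]

def neighborColors (f : V → α) (v : V) : Multiset α := (G.neighborFinset v).val.map f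

lemma card_neighborColors (f : V → α) (v : V) :
    Multiset.card (G.neighborColors f v) = G.degree v :=
  Multiset.card_map _ _

lemma ncard_setOf_adj (v : V) : {u | G.Adj v u}.ncard = G.degree v :=
  Set.ncard_eq_toFinset_card' (G.neighborSet v)

lemma ncard_setOf_adj_and_eq [DecidableEq α] (f : V → α) (v : V) (c : α) :
    {u | G.Adj v u ∧ f u = c}.ncard = (G.neighborColors f v).count c := by
  rw [neighborColors, Multiset.count_map, ← Finset.filter_val, Finset.card_val,
    ← Set.ncard_coe_finset]
  congr 1
  ext u
  simp [eq_comm]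

lemma isPCFColoring_iff_s6 [DecidableEq α] {h : ℕ} {f : V → α} :
    G.IsPCFColoring h f ↔ (∀ ⦃u w⦄, G.Adj u w → f u ≠ f w) ∧
      ∀ v, min h (G.degree v) ≤ (G.neighborColors f v).singles.card := by
  refine and_congr_right' (forall_congr' fun v => ?_)
  have hset :
      {c : α | {u | G.Adj v u ∧ f u = c}.ncard = 1} = ↑(G.neighborColors f v).singles := by
    ext c
    simp [ncard_setOf_adj_and_eq]
  rw [hset, Set.ncard_coe_finset, ncard_setOf_adj]

lemma neighborFinset_inter_insert_self [DecidableEq V] {s : V} {T : Finset V}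
    (h : T ⊆ G.neighborFinset s) : G.neighborFinset s ∩ insert s T = T := by
  rw [Finset.inter_insert_of_notMem (G.notMem_neighborFinset_self s), Finset.inter_eq_right.2 h]

end Colors

section Reduce

variable [DecidableEq V] {G : SimpleGraph V} [DecidableRel G.Adj] {S : Finset V}
  {φ ψ : V → α} {v s : V}

lemma neighborFinset_reduce [DecidableRel (G.reduce S).Adj] (hv : v ∉ S) :
    (G.reduce S).neighborFinset v = (G.neighborFinset v \ S) ∪
      (G.neighborFinset v ∩ S).biUnion fun s => (G.neighborFinset s \ S).erase v := by
  ext u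
  simp only [mem_neighborFinset, Finset.mem_union, Finset.mem_sdiff,
    Finset.mem_biUnion, Finset.mem_inter, Finset.mem_erase]
  constructor
  · rintro ⟨-, hu, hne, h | ⟨s, hs, hvs, hsu⟩⟩
    · exact Or.inl ⟨h, hu⟩
    · exact Or.inr ⟨s, ⟨hvs, hs⟩, Ne.symm hne, hsu, hu⟩
  · rintro (⟨h, hu⟩ | ⟨s, ⟨hvs, hs⟩, hne, hsu, hu⟩)
    · exact ⟨hv, hu, G.ne_of_adj h, Or.inl h⟩
    · exact ⟨hv, hu, Ne.symm hne, Or.inr ⟨s, hs, hvs, hsu⟩⟩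

lemma injOn_neighborFinset_sdiff (hφ : ∀ ⦃u w⦄, (G.reduce S).Adj u w → φ u ≠ φ w)
    (hs : s ∈ S) : Set.InjOn φ ↑(G.neighborFinset s \ S) := by
  intro u hu w hw huw
  by_contra hne
  simp only [Finset.coe_sdiff, Set.mem_sdiff, Finset.mem_coe, mem_neighborFinset] at hu hw
  exact hφ ⟨hu.2, hw.2, hne, Or.inr ⟨s, hs, hu.1.symm, hw.1⟩⟩ huw

lemma neighborColors_eq_add (f : V → α) (v : V) :
    G.neighborColors f v =
      (G.neighborFinset v ∩ S).val.map f + (G.neighborFinset v \ S).val.map f := by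
  rw [neighborColors, ← Multiset.map_add, ← Finset.filter_mem_eq_inter,
    ← Finset.filter_notMem_eq_sdiff, Finset.filter_val, Finset.filter_val,
    Multiset.filter_add_not]

lemma neighborColors_eq_add_of_eqOn (hψ : ∀ v ∉ S, ψ v = φ v) (v : V) :
    G.neighborColors ψ v =
      (G.neighborFinset v ∩ S).val.map ψ + (G.neighborFinset v \ S).val.map φ := by
  rw [neighborColors_eq_add (S := S)]
  exact congrArg _ (Multiset.map_congr rfl fun u hu => hψ u (Finset.mem_sdiff.1 hu).2)

variable [DecidableEq α]

def outerColors (G : SimpleGraph V) [DecidableRel G.Adj] (S : Finset V) (φ : V → α) (s : V) :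
    Finset α :=
  (G.neighborFinset s \ S).image φ

lemma two_le_card_singles_of_inter_eq_pair
    (hφ : ∀ ⦃u w⦄, (G.reduce S).Adj u w → φ u ≠ φ w) (hψ : ∀ v ∉ S, ψ v = φ v) {p q : V}
    (hs : s ∈ S) (hN : G.neighborFinset s ∩ S = {p, q})
    (hpq : p ≠ q) (hψpq : ψ p ≠ ψ q) (hp : ψ p ∉ outerColors G S φ s)
    (hq : ψ q ∉ outerColors G S φ s ∨ 2 ≤ (outerColors G S φ s).card) :
    2 ≤ (G.neighborColors ψ s).singles.card := by
  rw [neighborColors_eq_add_of_eqOn hψ, hN,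
    ← Finset.image_val_of_injOn (injOn_neighborFinset_sdiff hφ hs),
    Finset.insert_val_of_notMem (by simpa using hpq)]
  simp only [Finset.singleton_val, Multiset.map_cons, Multiset.map_singleton, Multiset.cons_add,
    Multiset.singleton_add]
  exact Multiset.two_le_card_singles_cons_cons (Finset.nodup _) hψpq hp hq

variable [Fintype α]

/-- The colors that a neighbor `s ∈ S` of `v ∉ S` must avoid: if `s` is the only such neighbor,
those that would leave `v` with fewer than `min 2 (deg v)` unique colors; otherwise the colors
already present on `N(v) \ S`, so that the (distinct) colors of `N(v) ∩ S` are unique at `v`. -/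
def badColors (G : SimpleGraph V) [DecidableRel G.Adj] (S : Finset V) (φ : V → α) (v : V) :
    Finset α :=
  if (G.neighborFinset v ∩ S).card ≤ 1 then ((G.neighborFinset v \ S).val.map φ).forbiddenCons
  else ((G.neighborFinset v \ S).val.map φ).toFinset

def outerBadColors (G : SimpleGraph V) [DecidableRel G.Adj] (S : Finset V) (φ : V → α)
    (s : V) : Finset α :=
  (G.neighborFinset s \ S).biUnion (badColors G S φ)

lemma card_badColors_le_two (hφ : (G.reduce S).IsPCFColoring 2 φ) (hv : v ∉ S)
    (hdeg : G.degree v ≤ 4) (hext : ∀ s ∈ S, (G.neighborFinset s \ S).card ≤ 2)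
    (hvS : (G.neighborFinset v ∩ S).Nonempty) : (badColors G S φ v).card ≤ 2 := by
  classical
  have hsplit := Finset.card_sdiff_add_card_inter (G.neighborFinset v) S
  rw [card_neighborFinset_eq_degree] at hsplit
  unfold badColors
  split_ifs with h1
  · obtain ⟨s, hs⟩ := Finset.card_eq_one.1 (le_antisymm h1 (Finset.card_pos.2 hvS))
    obtain ⟨hvs, hsS⟩ := Finset.mem_inter.1 (hs ▸ Finset.mem_singleton_self s)
    have hcard : Multiset.card ((G.neighborFinset v \ S).val.map φ) ≤ 3 := by
      have := Finset.card_pos.2 hvS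
      simp only [Multiset.card_map, Finset.card_val]
      omega
    refine Multiset.card_forbiddenCons_le_two hcard (or_iff_not_imp_left.2 fun hm => ?_)
    have hN := neighborFinset_reduce (G := G) hv
    rw [hs, Finset.singleton_biUnion] at hN
    have hpcf := ((G.reduce S).isPCFColoring_iff_s6.1 hφ).2 v
    rw [← card_neighborColors _ φ] at hpcf
    refine Multiset.one_le_card_singles_of_le ?_ ?_ hpcf hm
    · exact Multiset.map_le_map (Finset.val_le_iff.2 (hN ▸ Finset.subset_union_left))
    · have hvext : v ∈ G.neighborFinset s \ S := by
        simpa [hv] using ((mem_neighborFinset _ _ _).1 hvs).symm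
      have := Finset.card_union_le (G.neighborFinset v \ S) ((G.neighborFinset s \ S).erase v)
      have := Finset.card_erase_of_mem hvext
      have := hext s hsS
      simp only [neighborColors, Multiset.card_map, Finset.card_val, hN]
      omega
  · refine (Multiset.toFinset_card_le _).trans ?_
    simp only [Multiset.card_map, Finset.card_val]
    omega

lemma badColors_eq_empty (hφ : (G.reduce S).IsPCFColoring 2 φ) (hv : v ∉ S)
    (hdeg : G.degree v = 4) (hvS : G.neighborFinset v ∩ S = {s})
    (hs : G.neighborFinset s \ S = {v}) : badColors G S φ v = ∅ := by
  classical
  have hN : (G.reduce S).neighborFinset v = G.neighborFinset v \ S := by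
    rw [neighborFinset_reduce hv, hvS, Finset.singleton_biUnion, hs, Finset.erase_singleton,
      Finset.union_empty]
  have hcard : Multiset.card ((G.neighborFinset v \ S).val.map φ) = 3 := by
    have := Finset.card_sdiff_add_card_inter (G.neighborFinset v) S
    rw [hvS, Finset.card_singleton, card_neighborFinset_eq_degree, hdeg] at this
    simp only [Multiset.card_map, Finset.card_val]
    omega
  have hpcf := ((G.reduce S).isPCFColoring_iff_s6.1 hφ).2 v
  rw [← card_neighborColors _ φ, neighborColors, hN, hcard] at hpcf
  rw [badColors, hvS, Finset.card_singleton, if_pos le_rfl]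
  exact Multiset.forbiddenCons_eq_empty
    (Multiset.nodup_of_two_le_card_singles hcard.le hpcf) hcard.ge

lemma card_outerBadColors_le (hφ : (G.reduce S).IsPCFColoring 2 φ) (hs : s ∈ S)
    (hdeg : ∀ v, G.degree v ≤ 4) (hext : ∀ s ∈ S, (G.neighborFinset s \ S).card ≤ 2) :
    (outerBadColors G S φ s).card ≤ 2 * (outerColors G S φ s).card := by
  rw [outerBadColors, outerColors,
    Finset.card_image_of_injOn (injOn_neighborFinset_sdiff hφ.1 hs), mul_comm]
  refine Finset.card_biUnion_le_card_mul _ _ _ fun v hv => ?_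
  rw [Finset.mem_sdiff, mem_neighborFinset] at hv
  exact card_badColors_le_two hφ hv.2 (hdeg v) hext ⟨s, by simpa [hs] using hv.1.symm⟩

lemma min_two_degree_le_of_reduce (hφ : (G.reduce S).IsPCFColoring 2 φ)
    (hψ : ∀ v ∉ S, ψ v = φ v) (hinj : Set.InjOn ψ S)
    (hbad : ∀ s ∈ S, G.Adj v s → ψ s ∉ badColors G S φ v) (hv : v ∉ S) :
    min 2 (G.degree v) ≤ (G.neighborColors ψ v).singles.card := by
  classical
  have hcolors := neighborColors_eq_add_of_eqOn (G := G) hψ v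
  have hdeg := Finset.card_sdiff_add_card_inter (G.neighborFinset v) S
  rw [card_neighborFinset_eq_degree] at hdeg
  rcases (show (G.neighborFinset v ∩ S).card = 0 ∨ (G.neighborFinset v ∩ S).card = 1 ∨
      2 ≤ (G.neighborFinset v ∩ S).card by omega) with h0 | h1 | h2
  · rw [Finset.card_eq_zero] at h0
    have hN : (G.reduce S).neighborFinset v = G.neighborFinset v \ S := by
      rw [neighborFinset_reduce hv, h0, Finset.biUnion_empty, Finset.union_empty]
    have hpcf := ((G.reduce S).isPCFColoring_iff_s6.1 hφ).2 v
    rw [← card_neighborColors _ φ, neighborColors, hN] at hpcf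
    rw [hcolors, h0, ← hdeg, h0]
    simpa only [Finset.card_empty, add_zero, Finset.empty_val, Multiset.map_zero, zero_add,
      Multiset.card_map, Finset.card_val] using hpcf
  · obtain ⟨s, hs⟩ := Finset.card_eq_one.1 h1
    obtain ⟨hvs, hsS⟩ := Finset.mem_inter.1 (hs ▸ Finset.mem_singleton_self s)
    have hψs := hbad s hsS ((mem_neighborFinset _ _ _).1 hvs)
    rw [badColors, if_pos h1.le, Multiset.notMem_forbiddenCons] at hψs
    rw [hcolors, ← hdeg, hs]
    simpa only [Finset.card_singleton, Finset.singleton_val, Multiset.map_singleton,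
      Multiset.singleton_add, Multiset.card_map, Finset.card_val] using hψs
  · refine min_le_left _ _ |>.trans (h2.trans ?_)
    have hinjN : Set.InjOn ψ ↑(G.neighborFinset v ∩ S) := hinj.mono (by simp)
    rw [hcolors, ← Finset.image_val_of_injOn hinjN, ← Finset.card_image_of_injOn hinjN]
    refine Multiset.card_le_card_singles_add (Finset.nodup _) (Multiset.disjoint_left.2 ?_)
    intro c hc
    obtain ⟨s, hs, rfl⟩ := Finset.mem_image.1 hc
    obtain ⟨hvs, hsS⟩ := Finset.mem_inter.1 hs
    have hψs := hbad s hsS ((mem_neighborFinset _ _ _).1 hvs)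
    rwa [badColors, if_neg (by omega), Multiset.mem_toFinset] at hψs

theorem isPCFColoring_of_reduce (hφ : (G.reduce S).IsPCFColoring 2 φ)
    (hψ : ∀ v ∉ S, ψ v = φ v) (hinj : Set.InjOn ψ S)
    (hadj : ∀ s ∈ S, ∀ w ∉ S, G.Adj s w → ψ s ≠ φ w)
    (hS : ∀ s ∈ S, min 2 (G.degree s) ≤ (G.neighborColors ψ s).singles.card)
    (hbad : ∀ v ∉ S, ∀ s ∈ S, G.Adj v s → ψ s ∉ badColors G S φ v) :
    G.IsPCFColoring 2 ψ := by
  refine G.isPCFColoring_iff_s6.2 ⟨fun u w huw => ?_, fun v => ?_⟩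
  · by_cases hu : u ∈ S <;> by_cases hw : w ∈ S
    · exact hinj.ne hu hw (G.ne_of_adj huw)
    · rw [hψ w hw]; exact hadj u hu w hw huw
    · rw [hψ u hu]; exact (hadj w hw u hu huw.symm).symm
    · rw [hψ u hu, hψ w hw]; exact hφ.1 (reduce_adj_of_adj hu hw huw)
  by_cases hv : v ∈ S
  · exact hS v hv
  · exact min_two_degree_le_of_reduce hφ hψ hinj (hbad v hv) hv

end Reduce

section Triangle

variable [DecidableEq V] {G : SimpleGraph V} [DecidableRel G.Adj] {x y z x₁ : V}

lemma neighborFinset_inter_triangle (hxy : G.Adj x y) (hyz : G.Adj y z) (hxz : G.Adj x z) :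
    G.neighborFinset x ∩ {x, y, z} = {y, z} ∧ G.neighborFinset y ∩ {x, y, z} = {x, z} ∧
      G.neighborFinset z ∩ {x, y, z} = {x, y} := by
  refine ⟨G.neighborFinset_inter_insert_self (by simp [Finset.insert_subset_iff, hxy, hxz]),
    ?_, ?_⟩
  · rw [Finset.insert_comm]
    exact G.neighborFinset_inter_insert_self (by simp [Finset.insert_subset_iff, hxy.symm, hyz])
  · have hS : ({x, y, z} : Finset V) = {z, x, y} := by
      ext
      simp only [Finset.mem_insert, Finset.mem_singleton]
      tauto
    rw [hS]
    exact G.neighborFinset_inter_insert_self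
      (by simp [Finset.insert_subset_iff, hxz.symm, hyz.symm])

lemma neighborFinset_eq_of_degree_eq_three (hxy : G.Adj x y) (hyz : G.Adj y z)
    (hxz : G.Adj x z) (hxx₁ : G.Adj x x₁) (hx₁y : x₁ ≠ y) (hx₁z : x₁ ≠ z)
    (hdx : G.degree x = 3) :
    G.neighborFinset x = {y, z, x₁} := by
  have hsub : {y, z, x₁} ⊆ G.neighborFinset x := by
    simp [Finset.insert_subset_iff, hxy, hxz, hxx₁]
  refine (Finset.eq_of_subset_of_card_le hsub ?_).symm
  rw [card_neighborFinset_eq_degree, hdx,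
    Finset.card_eq_three.2 ⟨y, z, x₁, G.ne_of_adj hyz, hx₁y.symm, hx₁z.symm, rfl⟩]

lemma card_neighborFinset_sdiff_triangle_le (hxy : G.Adj x y) (hyz : G.Adj y z)
    (hxz : G.Adj x z) (hdeg : ∀ u, G.degree u ≤ 4) : ∀ s ∈ ({x, y, z} : Finset V),
      (G.neighborFinset s \ {x, y, z}).card ≤ 2 := by
  obtain ⟨hx, hy, hz⟩ := neighborFinset_inter_triangle hxy hyz hxz
  intro s hs
  have := Finset.card_sdiff_add_card_inter (G.neighborFinset s) {x, y, z}
  rw [card_neighborFinset_eq_degree] at this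
  have := hdeg s
  simp only [Finset.mem_insert, Finset.mem_singleton] at hs
  rcases hs with rfl | rfl | rfl
  · rw [hx, Finset.card_pair (G.ne_of_adj hyz)] at *; omega
  · rw [hy, Finset.card_pair (G.ne_of_adj hxz)] at *; omega
  · rw [hz, Finset.card_pair (G.ne_of_adj hxy)] at *; omega

lemma neighborFinset_sdiff_triangle (hNx : G.neighborFinset x = {y, z, x₁})
    (hx₁ : x₁ ∉ ({x, y, z} : Finset V)) : G.neighborFinset x \ {x, y, z} = {x₁} := by
  rw [hNx, Finset.insert_sdiff_of_mem _ (by simp), Finset.insert_sdiff_of_mem _ (by simp),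
    Finset.sdiff_eq_self_of_disjoint (Finset.disjoint_singleton_left.2 hx₁)]

variable [Fintype α] [DecidableEq α] {φ : V → α}

lemma badColors_eq_empty_or_mem_outerColors
    (hφ : (G.reduce ↑({x, y, z} : Finset V)).IsPCFColoring 2 φ)
    (hNx : G.neighborFinset x = {y, z, x₁}) (hx₁ : x₁ ∉ ({x, y, z} : Finset V))
    (hdx₁ : G.degree x₁ = 4) :
    badColors G {x, y, z} φ x₁ = ∅ ∨
      φ x₁ ∈ outerColors G {x, y, z} φ y ∪ outerColors G {x, y, z} φ z := by
  by_cases h : G.neighborFinset x₁ ∩ {x, y, z} = {x}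
  · exact Or.inl (badColors_eq_empty hφ hx₁ hdx₁ h (neighborFinset_sdiff_triangle hNx hx₁))
  · right
    have hxx₁ : G.Adj x x₁ := (G.mem_neighborFinset _ _).1 (by simp [hNx])
    obtain ⟨s, hs, hsx⟩ : ∃ s ∈ G.neighborFinset x₁ ∩ {x, y, z}, s ≠ x := by
      by_contra! hall
      exact h (Finset.eq_singleton_iff_unique_mem.2 ⟨by simpa using hxx₁.symm, hall⟩)
    simp only [Finset.mem_inter, mem_neighborFinset, Finset.mem_insert,
      Finset.mem_singleton] at hs
    simp only [outerColors, Finset.mem_union, Finset.mem_image, Finset.mem_sdiff,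
      mem_neighborFinset]
    rcases hs with ⟨hs, rfl | rfl | rfl⟩
    · exact absurd rfl hsx
    · exact Or.inl ⟨x₁, ⟨hs.symm, hx₁⟩, rfl⟩
    · exact Or.inr ⟨x₁, ⟨hs.symm, hx₁⟩, rfl⟩

theorem isPCFColoring_update_triangle {a b c : α}
    (hφ : (G.reduce ↑({x, y, z} : Finset V)).IsPCFColoring 2 φ)
    (hxy : G.Adj x y) (hyz : G.Adj y z) (hxz : G.Adj x z)
    (hNx : G.neighborFinset x = {y, z, x₁}) (hx₁ : x₁ ∉ ({x, y, z} : Finset V))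
    (hab : a ≠ b) (hac : a ≠ c) (hbc : b ≠ c)
    (ha : a ∉ insert (φ x₁) (outerColors G {x, y, z} φ y ∪ outerColors G {x, y, z} φ z ∪
      badColors G {x, y, z} φ x₁))
    (hb : b ∉ insert (φ x₁) (outerColors G {x, y, z} φ y ∪ outerBadColors G {x, y, z} φ y))
    (hc : c ∉ insert (φ x₁) (outerColors G {x, y, z} φ z ∪ outerBadColors G {x, y, z} φ z))
    (hbz : b ∉ outerColors G {x, y, z} φ z ∨ 2 ≤ (outerColors G {x, y, z} φ z).card)
    (hcy : c ∉ outerColors G {x, y, z} φ y ∨ 2 ≤ (outerColors G {x, y, z} φ y).card) :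
    G.IsPCFColoring 2 (Function.update (Function.update (Function.update φ x a) y b) z c) := by
  set S : Finset V := {x, y, z}
  set ψ := Function.update (Function.update (Function.update φ x a) y b) z c
  have hxy' := G.ne_of_adj hxy
  have hyz' := G.ne_of_adj hyz
  have hxz' := G.ne_of_adj hxz
  have hψx : ψ x = a := by simp [ψ, hxy', hxz']
  have hψy : ψ y = b := by simp [ψ, hyz']
  have hψz : ψ z = c := by simp [ψ]
  have hψ : ∀ v ∉ S, ψ v = φ v := by
    intro v hv
    simp only [S, Finset.mem_insert, Finset.mem_singleton, not_or] at hv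
    simp [ψ, hv.1, hv.2.1, hv.2.2]
  obtain ⟨hNxS, hNyS, hNzS⟩ := neighborFinset_inter_triangle hxy hyz hxz
  have hextx := neighborFinset_sdiff_triangle hNx hx₁
  have houtx : outerColors G S φ x = {φ x₁} := by
    rw [outerColors, hextx, Finset.image_singleton]
  simp only [Finset.mem_insert, Finset.mem_union, not_or] at ha hb hc
  have houter : ∀ s ∈ S, ∀ w ∈ G.neighborFinset s \ S,
      ψ s ≠ φ w ∧ ψ s ∉ badColors G S φ w := by
    intro s hs w hw
    simp only [S, Finset.mem_insert, Finset.mem_singleton] at hs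
    rcases hs with rfl | rfl | rfl
    · rw [hextx, Finset.mem_singleton] at hw
      rw [hψx, hw]
      exact ⟨ha.1, ha.2.2⟩
    · rw [hψy]
      exact ⟨fun h => hb.2.1 (h ▸ Finset.mem_image_of_mem φ hw),
        fun h => hb.2.2 (Finset.mem_biUnion.2 ⟨w, hw, h⟩)⟩
    · rw [hψz]
      exact ⟨fun h => hc.2.1 (h ▸ Finset.mem_image_of_mem φ hw),
        fun h => hc.2.2 (Finset.mem_biUnion.2 ⟨w, hw, h⟩)⟩
  refine isPCFColoring_of_reduce hφ hψ ?_
    (fun s hs w hw hsw => (houter s hs w (by simpa [hw] using hsw)).1) ?_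
    (fun v hv s hs hvs => (houter s hs v (by simpa [hv] using hvs.symm)).2)
  · intro u hu w hw
    simp only [S, Finset.coe_insert, Finset.coe_singleton, Set.mem_insert_iff,
      Set.mem_singleton_iff] at hu hw
    rcases hu with rfl | rfl | rfl <;> rcases hw with rfl | rfl | rfl <;>
      simp [hψx, hψy, hψz, hab, hac, hbc, hab.symm, hac.symm, hbc.symm]
  · intro s hs
    refine (min_le_left _ _).trans ?_
    simp only [S, Finset.mem_insert, Finset.mem_singleton] at hs
    rcases hs with rfl | rfl | rfl
    · refine two_le_card_singles_of_inter_eq_pair hφ.1 hψ (by simp [S]) hNxS hyz'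
        (by rwa [hψy, hψz]) (by simpa [houtx, hψy] using hb.1) (Or.inl ?_)
      simpa [houtx, hψz] using hc.1
    · exact two_le_card_singles_of_inter_eq_pair hφ.1 hψ (by simp [S]) hNyS hxz'
        (by rwa [hψx, hψz]) (by rw [hψx]; exact ha.2.1.1) (by rwa [hψz])
    · exact two_le_card_singles_of_inter_eq_pair hφ.1 hψ (by simp [S]) hNzS hxy'
        (by rwa [hψx, hψy]) (by rw [hψx]; exact ha.2.1.2) (by rwa [hψy])

end Triangle

end SimpleGraph

open SimpleGraph in
theorem reduce_triangle_with_pendant_four_vertex {V : Type*} [Fintype V]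
    (G : SimpleGraph V)
    (hΔ : ∀ u : V, {w | G.Adj u w}.ncard ≤ 4)
    (x y z x₁ : V)
    (hxy : G.Adj x y) (hyz : G.Adj y z) (hxz : G.Adj x z)
    (hdx : {w | G.Adj x w}.ncard = 3)
    (hxx₁ : G.Adj x x₁) (hx₁y : x₁ ≠ y) (hx₁z : x₁ ≠ z)
    (hdx₁ : {w | G.Adj x₁ w}.ncard = 4)
    (h : (G.reduce {x, y, z}).HasPCFColoring 2 9) :
    G.HasPCFColoring 2 9 := by
  classical
  obtain ⟨φ, hφ⟩ := h
  set S : Finset V := {x, y, z}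
  replace hφ : (G.reduce ↑S).IsPCFColoring 2 φ := by simpa [S] using hφ
  have hdeg (u : V) : G.degree u ≤ 4 := G.ncard_setOf_adj u ▸ hΔ u
  have hNx := neighborFinset_eq_of_degree_eq_three hxy hyz hxz hxx₁ hx₁y hx₁z
    (G.ncard_setOf_adj x ▸ hdx)
  have hx₁ : x₁ ∉ S := by simp [S, hx₁y, hx₁z, (G.ne_of_adj hxx₁).symm]
  have hext := card_neighborFinset_sdiff_triangle_le hxy hyz hxz hdeg
  obtain ⟨a, b, c, hab, hac, hbc, ha, hb, hc, hbz, hcy⟩ :=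
    exists_triangle_colors (by simp) (φ x₁)
      (Finset.card_image_le.trans (hext y (by simp)))
      (Finset.card_image_le.trans (hext z (by simp)))
      (card_outerBadColors_le hφ (by simp) hdeg hext)
      (card_outerBadColors_le hφ (by simp) hdeg hext)
      (card_badColors_le_two hφ hx₁ (hdeg x₁) hext ⟨x, by simpa [S] using hxx₁.symm⟩)
      (badColors_eq_empty_or_mem_outerColors hφ hNx hx₁ (G.ncard_setOf_adj x₁ ▸ hdx₁))
  exact ⟨_, isPCFColoring_update_triangle hφ hxy hyz hxz hNx hx₁ hab hac hbc
    ha hb hc hbz hcy⟩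
end
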